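/- Consider on ℝ³ the vector fields X₀(x) = (cos x₃, sin x₃, 1) and X₁(x) = (0, 0, 1), and the family ℱ' = {X₀ + u·X₁ : u ∈ ℝ}. There exists T₁ > 0 such that for every x' ∈ ℝ³, every z ∈ ℝ³, and every ε > 0, there exist a piecewise integral curve η : [0, T₁] → ℝ³ of ℱ' with η(0) = x' and a lattice point k ∈ ℤ³ with |η(T₁) − z − 2πk| < ε. (Equivalently, on the torus 𝕋³ = (ℝ/2πℤ)³, the closure of the time-T₁ reachable set of ℱ' from any point is all of 𝕋³.) -/

import Mathlib

open scoped RealInnerProductSpace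

/-- A piecewise integral curve of a family `F` of vector fields on `[0, T]`:
a continuous curve which, on each piece of some partition `0 = t₀ < t₁ < … < t_m = T`,
is an integral curve of a single member of `F`. -/
def IsPiecewiseIntegralCurve {E : Type*} [NormedAddCommGroup E] [NormedSpace ℝ E]
    (F : Set (E → E)) (T : ℝ) (η : ℝ → E) : Prop :=
  ContinuousOn η (Set.Icc 0 T) ∧
  ∃ (m : ℕ) (τ : Fin (m + 1) → ℝ), τ 0 = 0 ∧ τ (Fin.last m) = T ∧ StrictMono τ ∧
    ∀ i : Fin m, ∃ V ∈ F, ∀ s ∈ Set.Ioo (τ i.castSucc) (τ i.succ),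
      HasDerivAt η (V (η s)) s

/-- The drift vector field `X₀(x) = (cos x₃, sin x₃, 1)` on `ℝ³`. -/
noncomputable def X0 : EuclideanSpace ℝ (Fin 3) → EuclideanSpace ℝ (Fin 3) :=
  fun x => WithLp.toLp 2 ![Real.cos (x 2), Real.sin (x 2), 1]

/-- The vector field `X₁(x) = (0, 0, 1)` on `ℝ³`. -/
noncomputable def X1 : EuclideanSpace ℝ (Fin 3) → EuclideanSpace ℝ (Fin 3) :=
  fun _ => WithLp.toLp 2 ![0, 0, 1]

/-- The control family `ℱ' = {X₀ + u·X₁ : u ∈ ℝ}`. -/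
noncomputable def F' : Set (EuclideanSpace ℝ (Fin 3) → EuclideanSpace ℝ (Fin 3)) :=
  {V | ∃ u : ℝ, V = fun x => X0 x + u • X1 x}

/-- The lattice point `2πk ∈ ℝ³` for `k ∈ ℤ³`. -/
noncomputable def latticePt (k : Fin 3 → ℤ) : EuclideanSpace ℝ (Fin 3) :=
  WithLp.toLp 2 (fun i => 2 * Real.pi * (k i : ℝ))

/-!
The heading `x 2` can be turned at any speed while the planar part `(x 0, x 1)` moves with unit
speed in the direction of the heading, so within time `δ` one can turn to any heading while moving
at most `δ` in the plane. Turning to `θ₁`, going straight for time `L`, turning to `θ₂`, going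
straight for time `L` and finally turning to the heading of the target moves the plane by
`L (e^{iθ₁} + e^{iθ₂})` up to `3δ`. Every displacement of norm at most `2L` has this form, and
modulo `2πℤ²` the required planar displacement has norm at most `2π`, so `T₁ = 8` works.
-/
open Real Set Matrix

section Concatenation

variable {E : Type*} [NormedAddCommGroup E] [NormedSpace ℝ E] {F : Set (E → E)}

theorem isPiecewiseIntegralCurve_zero (F : Set (E → E)) (η : ℝ → E) :
    IsPiecewiseIntegralCurve F 0 η :=
  ⟨by simp, 0, fun _ => 0, rfl, rfl, Subsingleton.strictMono (α := Fin 1) _, fun i => i.elim0⟩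

theorem IsPiecewiseIntegralCurve.cons {γ η : ℝ → E} {V : E → E} {h T : ℝ} (hV : V ∈ F)
    (hh : 0 < h) (hγc : ContinuousOn γ (Icc 0 h)) (hγ : ∀ s ∈ Ioo 0 h, HasDerivAt γ (V (γ s)) s)
    (hη : IsPiecewiseIntegralCurve F T η) (hγη : γ h = η 0) :
    IsPiecewiseIntegralCurve F (h + T) (fun t => if t < h then γ t else η (t - h)) := by
  obtain ⟨hηc, m, τ, hτ0, hτT, hτ, hτV⟩ := hη
  have hτ_nonneg (i) : 0 ≤ τ i := hτ0 ▸ hτ.monotone (Fin.zero_le i)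
  have hlt : {t : ℝ | t < h} = Iio h := rfl
  have hnlt : {t : ℝ | ¬t < h} = Ici h := by ext; simp
  refine ⟨?_, m + 1, vecCons 0 (fun i => h + τ i), rfl, ?_, ?_, ?_⟩
  · apply ContinuousOn.if
    · rintro t ⟨-, ht⟩
      rw [hlt, frontier_Iio, mem_singleton_iff] at ht
      simp [ht, hγη]
    · refine hγc.mono fun t ⟨ht, ht'⟩ => ⟨ht.1, ?_⟩
      simpa [hlt] using ht'
    · rw [hnlt, closure_Ici]
      refine hηc.comp (continuousOn_id.sub continuousOn_const) fun t ⟨ht, ht'⟩ => ?_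
      simp only [mem_Icc, mem_Ici] at ht ht' ⊢
      constructor <;> linarith
  · simp [← Fin.succ_last, hτT]
  · simpa [hτ0, hh] using hτ.const_add h
  · refine Fin.cases ⟨V, hV, fun s hs => ?_⟩ fun i => ?_
    · have hs' : s ∈ Ioo 0 h := by simpa [hτ0] using hs
      have hev : (fun t => if t < h then γ t else η (t - h)) =ᶠ[nhds s] γ :=
        Filter.eventually_of_mem (Iio_mem_nhds hs'.2) fun t ht => if_pos ht
      have := (hγ s hs').congr_of_eventuallyEq hev
      rwa [← hev.eq_of_nhds] at this
    · obtain ⟨W, hW, hηW⟩ := hτV i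
      refine ⟨W, hW, fun s hs => ?_⟩
      simp only [← Fin.succ_castSucc, cons_val_succ] at hs
      have hs' : s - h ∈ Ioo (τ i.castSucc) (τ i.succ) := by
        constructor <;> linarith [hs.1, hs.2]
      have hev : (fun t => if t < h then γ t else η (t - h)) =ᶠ[nhds s] fun t => η (t - h) :=
        Filter.eventually_of_mem (Ioi_mem_nhds (by linarith [hs.1, hτ_nonneg i.castSucc]))
          fun t ht => if_neg (not_lt.2 (le_of_lt ht))
      have := ((hηW _ hs').comp_sub_const s h).congr_of_eventuallyEq hev
      rwa [← hev.eq_of_nhds] at this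

end Concatenation

theorem EuclideanSpace.norm_le_sum_norm {ι : Type*} [Fintype ι] (v : EuclideanSpace ℝ ι) :
    ‖v‖ ≤ ∑ i, ‖v i‖ := by
  rw [EuclideanSpace.norm_eq, Real.sqrt_le_iff]
  exact ⟨by positivity, Finset.sum_sq_le_sq_sum_of_nonneg fun _ _ => norm_nonneg _⟩

theorem exists_int_abs_add_two_pi_mul_le_pi (w : ℝ) : ∃ k : ℤ, |w + 2 * π * k| ≤ π := by
  obtain ⟨h₁, h₂⟩ := toIocMod_mem_Ioc two_pi_pos (-π) w
  rw [← self_sub_toIocDiv_zsmul] at h₁ h₂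
  refine ⟨-toIocDiv two_pi_pos (-π) w, abs_le.2 ⟨?_, ?_⟩⟩ <;>
    simp only [zsmul_eq_mul, Int.cast_neg] at * <;> linarith

theorem exists_angles_of_norm_le {w : ℂ} {L : ℝ} (h : ‖w‖ ≤ 2 * L) :
    ∃ θ₁ θ₂ : ℝ, L * cos θ₁ + L * cos θ₂ = w.re ∧ L * sin θ₁ + L * sin θ₂ = w.im := by
  set α := arccos (‖w‖ / (2 * L))
  have hα : 2 * L * cos α = ‖w‖ := by
    rcases ((norm_nonneg w).trans h).eq_or_lt with hL | hL
    · have hw : ‖w‖ = 0 := le_antisymm (hL ▸ h) (norm_nonneg w)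
      simp [hw, show L = 0 by linarith]
    · rw [cos_arccos (by linarith [div_nonneg (norm_nonneg w) hL.le]) ((div_le_one hL).2 h)]
      field_simp [show L ≠ 0 by linarith]
  refine ⟨w.arg + α, w.arg - α, ?_, ?_⟩
  · rw [← Complex.norm_mul_cos_arg w, cos_add, cos_sub, ← hα]; ring
  · rw [← Complex.norm_mul_sin_arg w, sin_add, sin_sub, ← hα]; ring

theorem abs_sub_add_le_of_steps {a₀ a₁ a₂ a₃ a₄ a₅ u v r : ℝ} (h₁ : |a₁ - a₀| ≤ r)
    (h₂ : a₂ = a₁ + u) (h₃ : |a₃ - a₂| ≤ r) (h₄ : a₄ = a₃ + v) (h₅ : |a₅ - a₄| ≤ r) :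
    |a₅ - (a₀ + (u + v))| ≤ 3 * r := by
  rw [abs_le] at *
  constructor <;> linarith

local notation "ℝ³" => EuclideanSpace ℝ (Fin 3)

/-- The flow of `X0 + (c - 1) • X1`: the heading `x 2` turns at constant speed `c`. -/
noncomputable def flow (c : ℝ) (x : ℝ³) (t : ℝ) : ℝ³ :=
  WithLp.toLp 2 ![x 0 + ∫ s in (0)..t, cos (x 2 + c * s),
    x 1 + ∫ s in (0)..t, sin (x 2 + c * s), x 2 + c * t]

section Flow

variable (c : ℝ) (x : ℝ³) (t : ℝ)

@[simp]
theorem flow_time_zero : flow c x 0 = x := by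
  ext i
  fin_cases i <;> simp [flow]

@[simp]
theorem flow_apply_two : flow c x t 2 = x 2 + c * t := by
  simp [flow]

theorem flow_zero_apply_zero : flow 0 x t 0 = x 0 + t * cos (x 2) := by
  simp [flow]

theorem flow_zero_apply_one : flow 0 x t 1 = x 1 + t * sin (x 2) := by
  simp [flow]

theorem abs_flow_apply_zero_sub_le : |flow c x t 0 - x 0| ≤ |t| := by
  simpa [flow] using intervalIntegral.norm_integral_le_of_norm_le_const
    (a := 0) (b := t) (C := 1) (f := fun s => cos (x 2 + c * s)) fun s _ => abs_cos_le_one _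

theorem abs_flow_apply_one_sub_le : |flow c x t 1 - x 1| ≤ |t| := by
  simpa [flow] using intervalIntegral.norm_integral_le_of_norm_le_const
    (a := 0) (b := t) (C := 1) (f := fun s => sin (x 2 + c * s)) fun s _ => abs_sin_le_one _

theorem hasDerivAt_flow :
    HasDerivAt (flow c x) (X0 (flow c x t) + (c - 1) • X1 (flow c x t)) t := by
  have hpi : HasDerivAt (fun t => (![x 0 + ∫ s in (0)..t, cos (x 2 + c * s),
      x 1 + ∫ s in (0)..t, sin (x 2 + c * s), x 2 + c * t] : Fin 3 → ℝ))
      ![cos (x 2 + c * t), sin (x 2 + c * t), c] t := by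
    rw [hasDerivAt_pi]
    intro i
    fin_cases i
    · simpa using ((continuous_cos.comp (by fun_prop)).integral_hasStrictDerivAt 0 t
        |>.hasDerivAt.const_add (x 0))
    · simpa using ((continuous_sin.comp (by fun_prop)).integral_hasStrictDerivAt 0 t
        |>.hasDerivAt.const_add (x 1))
    · simpa using ((hasDerivAt_id t).const_mul c).const_add (x 2)
  refine ((PiLp.hasFDerivAt_toLp 2 _).comp_hasDerivAt t hpi).congr_deriv (PiLp.ext fun i => ?_)
  fin_cases i <;> simp [X0, X1]

theorem continuous_flow : Continuous (flow c x) :=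
  continuous_iff_continuousAt.2 fun t => (hasDerivAt_flow c x t).continuousAt

end Flow

theorem flow_steer_apply_two (x : ℝ³) {θ₀ θ δ : ℝ} (hx : x 2 = θ₀) (hδ : δ ≠ 0) :
    flow ((θ - θ₀) / δ) x δ 2 = θ := by
  rw [flow_apply_two, hx]
  field_simp
  ring

noncomputable def controlCurve : List (ℝ × ℝ) → ℝ³ → ℝ → ℝ³
  | [], x => fun _ => x
  | (c, h) :: l, x => fun t => if t < h then flow c x t else controlCurve l (flow c x h) (t - h)

theorem controlCurve_time_zero {l : List (ℝ × ℝ)} (hl : ∀ p ∈ l, 0 < p.2) (x : ℝ³) :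
    controlCurve l x 0 = x := by
  match l, hl with
  | [], _ => rfl
  | (c, h) :: l, hl => simp [controlCurve, hl _ List.mem_cons_self]

theorem controlCurve_sum {l : List (ℝ × ℝ)} (hl : ∀ p ∈ l, 0 < p.2) (x : ℝ³) :
    controlCurve l x (l.map Prod.snd).sum = l.foldl (fun y p => flow p.1 y p.2) x := by
  induction l generalizing x with
  | nil => rfl
  | cons p l ih =>
    obtain ⟨c, h⟩ := p
    have hl' : ∀ q ∈ l, 0 < q.2 := fun q hq => hl q (List.mem_cons_of_mem _ hq)
    have hsum : 0 ≤ (l.map Prod.snd).sum :=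
      List.sum_nonneg fun _ ha => by
        obtain ⟨q, hq, rfl⟩ := List.mem_map.1 ha
        exact (hl' q hq).le
    simp [controlCurve, hsum, ih hl']

theorem isPiecewiseIntegralCurve_controlCurve {l : List (ℝ × ℝ)} (hl : ∀ p ∈ l, 0 < p.2)
    (x : ℝ³) : IsPiecewiseIntegralCurve F' (l.map Prod.snd).sum (controlCurve l x) := by
  induction l generalizing x with
  | nil => exact isPiecewiseIntegralCurve_zero F' _
  | cons p l ih =>
    obtain ⟨c, h⟩ := p
    have hl' : ∀ q ∈ l, 0 < q.2 := fun q hq => hl q (List.mem_cons_of_mem _ hq)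
    have hV : (fun y => X0 y + (c - 1) • X1 y) ∈ F' := ⟨c - 1, rfl⟩
    exact .cons hV (hl _ List.mem_cons_self) (continuous_flow c x).continuousOn
      (fun s _ => hasDerivAt_flow c x s) (ih hl' _) (controlCurve_time_zero hl' _).symm

theorem maneuver_endpoint (x : ℝ³) (θ₁ θ₂ θ₃ L : ℝ) {δ : ℝ} (hδ : 0 < δ) :
    let y := [((θ₁ - x 2) / δ, δ), (0, L), ((θ₂ - θ₁) / δ, δ), (0, L), ((θ₃ - θ₂) / δ, δ)].foldl
      (fun y p => flow p.1 y p.2) x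
    y 2 = θ₃ ∧ |y 0 - (x 0 + (L * cos θ₁ + L * cos θ₂))| ≤ 3 * δ ∧
      |y 1 - (x 1 + (L * sin θ₁ + L * sin θ₂))| ≤ 3 * δ := by
  simp only [List.foldl_cons, List.foldl_nil]
  set y₁ := flow ((θ₁ - x 2) / δ) x δ
  set y₂ := flow 0 y₁ L
  set y₃ := flow ((θ₂ - θ₁) / δ) y₂ δ
  set y₄ := flow 0 y₃ L
  have h₁ : y₁ 2 = θ₁ := flow_steer_apply_two x rfl hδ.ne'
  have h₃ : y₃ 2 = θ₂ := flow_steer_apply_two y₂ (by simp [y₂, h₁]) hδ.ne'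
  have d₀ (c : ℝ) (y : ℝ³) : |flow c y δ 0 - y 0| ≤ δ :=
    (abs_flow_apply_zero_sub_le c y δ).trans_eq (abs_of_pos hδ)
  have d₁ (c : ℝ) (y : ℝ³) : |flow c y δ 1 - y 1| ≤ δ :=
    (abs_flow_apply_one_sub_le c y δ).trans_eq (abs_of_pos hδ)
  refine ⟨flow_steer_apply_two y₄ (by simp [y₄, h₃]) hδ.ne', ?_, ?_⟩
  · refine abs_sub_add_le_of_steps (a₁ := y₁ 0) (a₃ := y₃ 0) (d₀ _ x) ?_ (d₀ _ y₂) ?_ (d₀ _ y₄)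
    · rw [flow_zero_apply_zero, h₁, mul_comm]
    · rw [flow_zero_apply_zero, h₃, mul_comm]
  · refine abs_sub_add_le_of_steps (a₁ := y₁ 1) (a₃ := y₃ 1) (d₁ _ x) ?_ (d₁ _ y₂) ?_ (d₁ _ y₄)
    · rw [flow_zero_apply_one, h₁, mul_comm]
    · rw [flow_zero_apply_one, h₃, mul_comm]

theorem exists_controls_near (x z : ℝ³) {δ T : ℝ} (hδ : 0 < δ) (hT : 2 * π + 3 * δ ≤ T) :
    ∃ l : List (ℝ × ℝ), (∀ p ∈ l, 0 < p.2) ∧ (l.map Prod.snd).sum = T ∧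
      ∃ k, ‖l.foldl (fun y p => flow p.1 y p.2) x - z - latticePt k‖ ≤ 6 * δ := by
  set L := (T - 3 * δ) / 2
  have hL : 2 * L = T - 3 * δ := by ring
  obtain ⟨k₀, hk₀⟩ := exists_int_abs_add_two_pi_mul_le_pi (z 0 - x 0)
  obtain ⟨k₁, hk₁⟩ := exists_int_abs_add_two_pi_mul_le_pi (z 1 - x 1)
  set w : ℂ := ⟨z 0 - x 0 + 2 * π * k₀, z 1 - x 1 + 2 * π * k₁⟩
  have hw : ‖w‖ ≤ 2 * L := (Complex.norm_le_abs_re_add_abs_im w).trans (by simp only [w]; linarith)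
  obtain ⟨θ₁, θ₂, hre, him⟩ := exists_angles_of_norm_le hw
  refine ⟨[((θ₁ - x 2) / δ, δ), (0, L), ((θ₂ - θ₁) / δ, δ), (0, L), ((z 2 - θ₂) / δ, δ)],
    ?_, ?_, ![k₀, k₁, 0], ?_⟩
  · have hL₀ : 0 < L := by linarith [pi_pos]
    simp [hδ, hL₀]
  · simp only [List.map, List.sum_cons, List.sum_nil]
    linarith
  · obtain ⟨h₂, h₀, h₁⟩ := maneuver_endpoint x θ₁ θ₂ (z 2) L hδ
    rw [hre, show x 0 + w.re = z 0 + 2 * π * k₀ by simp only [w]; ring] at h₀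
    rw [him, show x 1 + w.im = z 1 + 2 * π * k₁ by simp only [w]; ring] at h₁
    generalize List.foldl _ x _ = y at h₀ h₁ h₂ ⊢
    calc _ ≤ _ := EuclideanSpace.norm_le_sum_norm _
      _ ≤ 3 * δ + 3 * δ + 0 := by
        simp only [Fin.sum_univ_three, PiLp.sub_apply, latticePt, Real.norm_eq_abs, h₂]
        simpa [sub_sub] using add_le_add h₀ h₁
      _ = 6 * δ := by ring

/-- There exists `T₁ > 0` such that from any `x' ∈ ℝ³` and towards any
target `z ∈ ℝ³` and any `ε > 0`, some piecewise integral curve of `ℱ'` starting at `x'`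
reaches, at time `T₁`, an `ε`-neighborhood of `z` modulo the lattice `2πℤ³`. -/
theorem statement12 :
    ∃ T₁ : ℝ, 0 < T₁ ∧ ∀ x' z : EuclideanSpace ℝ (Fin 3), ∀ ε : ℝ, 0 < ε →
      ∃ η : ℝ → EuclideanSpace ℝ (Fin 3),
        IsPiecewiseIntegralCurve F' T₁ η ∧ η 0 = x' ∧
        ∃ k : Fin 3 → ℤ, ‖η T₁ - z - latticePt k‖ < ε := by
  refine ⟨8, by norm_num, fun x' z ε hε => ?_⟩
  set δ := min (1 / 2) (ε / 7)
  have hδ : 0 < δ := lt_min (by norm_num) (by positivity)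
  have hT : 2 * π + 3 * δ ≤ 8 := by linarith [pi_lt_d2, min_le_left (1 / 2 : ℝ) (ε / 7)]
  obtain ⟨l, hl, hsum, k, hk⟩ := exists_controls_near x' z hδ hT
  refine ⟨controlCurve l x', hsum ▸ isPiecewiseIntegralCurve_controlCurve hl x',
    controlCurve_time_zero hl x', k, ?_⟩
  rw [← hsum, controlCurve_sum hl]
  linarith [min_le_right (1 / 2 : ℝ) (ε / 7)]
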